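/- Explicit bound for Dickson's lemma: for all functions f, g : ℕ → ℕ, the statement D(I^{f(0)+g(0)+1}(0)) holds, i.e., there exist i < j ≤ I^{f(0)+g(0)+1}(0) with f i ≤ f j and g i ≤ g j, where I^m denotes the m-fold iterate of I. -/
import Mathlib


def Mini (f : ℕ → ℕ) : ℕ → ℕ
  | 0 => 0
  | n + 1 => if f (Mini f n) ≤ f (n + 1) then Mini f n else n + 1

def Psi (f g : ℕ → ℕ) (n : ℕ) : ℕ := max (f (Mini g n)) (g (Mini f n))

def Phi (f g : ℕ → ℕ) (n : ℕ) : ℕ := f (Mini f n) + g (Mini g n)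

def I (f g : ℕ → ℕ) (n : ℕ) : ℕ := n + (Psi f g n) ^ 2 + 1

def D (f g : ℕ → ℕ) (n : ℕ) : Prop :=
  ∃ i j, i < j ∧ j ≤ n ∧ f i ≤ f j ∧ g i ≤ g j

lemma mini_le (f : ℕ → ℕ) : ∀ n, Mini f n ≤ n
  | 0 => le_refl 0
  | n + 1 => by
    unfold Mini
    split
    · exact le_trans (mini_le f n) (Nat.le_succ n)
    · exact le_refl _

lemma f_mini_le (f : ℕ → ℕ) : ∀ n k, k ≤ n → f (Mini f n) ≤ f k
  | 0, k, h => by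
    interval_cases k
    simp [Mini]
  | n + 1, k, h => by
    unfold Mini
    rcases Nat.lt_succ_iff_lt_or_eq.mp (Nat.lt_succ_of_le h) with h' | h'
    · split
      · exact f_mini_le f n k (Nat.lt_succ_iff.mp h')
      · exact le_trans (Nat.le_of_lt (Nat.lt_of_not_le (by assumption)))
          (f_mini_le f n k (Nat.lt_succ_iff.mp h'))
    · subst h'
      split
      · assumption
      · exact le_refl _

lemma f_mini_mono (f : ℕ → ℕ) {m n : ℕ} (h : m ≤ n) :
    f (Mini f n) ≤ f (Mini f m) :=
  f_mini_le f n _ (le_trans (mini_le f m) h)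

lemma D_mono (f g : ℕ → ℕ) {m n : ℕ} (h : m ≤ n) (hd : D f g m) : D f g n := by
  obtain ⟨i, j, h1, h2, h3, h4⟩ := hd
  exact ⟨i, j, h1, le_trans h2 h, h3, h4⟩

lemma key (f g : ℕ → ℕ) (n : ℕ) (hD : ¬ D f g (I f g n)) :
    Phi f g (I f g n) < Phi f g n := by
  set N := I f g n with hN
  have hnN : n < N := by simp only [hN, I]; omega
  by_cases h1 : ∃ j ∈ Finset.Ioc n N, f j < f (Mini f n)
  · obtain ⟨j, hj, hlt⟩ := h1
    simp only [Finset.mem_Ioc] at hj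
    have e1 : f (Mini f N) ≤ f j := f_mini_le f N j hj.2
    have e2 : g (Mini g N) ≤ g (Mini g n) := f_mini_mono g hnN.le
    unfold Phi; omega
  · by_cases h2 : ∃ j ∈ Finset.Ioc n N, g j < g (Mini g n)
    · obtain ⟨j, hj, hlt⟩ := h2
      simp only [Finset.mem_Ioc] at hj
      have e1 : g (Mini g N) ≤ g j := f_mini_le g N j hj.2
      have e2 : f (Mini f N) ≤ f (Mini f n) := f_mini_mono f hnN.le
      unfold Phi; omega
    · exfalso
      push_neg at h1 h2
      set P := Psi f g n with hP
      -- for each j in Ioc n N : f j < P and g j < P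
      have hbound : ∀ j ∈ Finset.Ioc n N, f j < P ∧ g j < P := by
        intro j hj
        have hj' := Finset.mem_Ioc.mp hj
        have hi1 : Mini f n < j := lt_of_le_of_lt (mini_le f n) hj'.1
        have hi2 : Mini g n < j := lt_of_le_of_lt (mini_le g n) hj'.1
        have hf : f (Mini f n) ≤ f j := h1 j hj
        have hg : g (Mini g n) ≤ g j := h2 j hj
        have c1 : ¬ (g (Mini f n) ≤ g j) := by
          intro hc
          exact hD ⟨Mini f n, j, hi1, hj'.2, hf, hc⟩
        have c2 : ¬ (f (Mini g n) ≤ f j) := by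
          intro hc
          exact hD ⟨Mini g n, j, hi2, hj'.2, hc, hg⟩
        constructor
        · exact lt_of_lt_of_le (Nat.lt_of_not_le c2) (le_max_left _ _)
        · exact lt_of_lt_of_le (Nat.lt_of_not_le c1) (le_max_right _ _)
      have hinj : Set.InjOn (fun j => (f j, g j)) (Finset.Ioc n N) := by
        intro a ha b hb hab
        by_contra hne
        simp only [Finset.coe_Ioc, Set.mem_Ioc] at ha hb
        simp only [Prod.mk.injEq] at hab
        rcases Nat.lt_or_ge a b with h | h
        · exact hD ⟨a, b, h, hb.2, hab.1.le, hab.2.le⟩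
        · exact hD ⟨b, a, lt_of_le_of_ne h (Ne.symm hne), ha.2, hab.1.ge, hab.2.ge⟩
      have hmaps : ∀ j ∈ Finset.Ioc n N, (fun j => (f j, g j)) j ∈
          Finset.range P ×ˢ Finset.range P := by
        intro j hj
        obtain ⟨hf, hg⟩ := hbound j hj
        simp [Finset.mem_product, hf, hg]
      have hcard := Finset.card_le_card_of_injOn _ hmaps hinj
      rw [Finset.card_product, Finset.card_range, Nat.card_Ioc] at hcard
      have : N - n = P ^ 2 + 1 := by simp only [hN, I, ← hP]; omega
      rw [this] at hcard
      nlinarith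

theorem bound_dickson (f g : ℕ → ℕ) :
    D f g ((I f g)^[f 0 + g 0 + 1] 0) := by
  by_contra hD
  set m := f 0 + g 0 + 1 with hm
  have hmono : Monotone fun k => (I f g)^[k] 0 := by
    apply monotone_nat_of_le_succ
    intro k
    rw [Function.iterate_succ_apply']
    unfold I; omega
  have hDk : ∀ k ≤ m, ¬ D f g ((I f g)^[k] 0) := by
    intro k hk hd
    exact hD (D_mono f g (hmono hk) hd)
  have hstep : ∀ k, k ≤ m → Phi f g ((I f g)^[k] 0) + k ≤ f 0 + g 0 := by
    intro k
    induction k with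
    | zero =>
      intro _
      simp [Phi, Mini]
    | succ k ih =>
      intro hk
      have h1 := ih (Nat.le_of_succ_le hk)
      have h2 : Phi f g ((I f g)^[k + 1] 0) < Phi f g ((I f g)^[k] 0) := by
        rw [Function.iterate_succ_apply']
        apply key
        have := hDk (k + 1) hk
        rwa [Function.iterate_succ_apply'] at this
      omega
  have := hstep m le_rfl
  omega
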